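/- Let E = ℝ^n with the Euclidean inner product. Let J : E → ℝ be convex, and let H : E → ℝ be convex and differentiable with gradient ∇H Lipschitz continuous with constant L > 0. Let u* be a minimizer of J + H and fix a step parameter δ ≥ L. For u ∈ E let P(u) denote the (unique) minimizer of v ↦ J(v) + (δ/2)‖v − (u − (1/δ)∇H(u))‖², and define R(w) = ⟨∇H(u*), w − u*⟩ + J(w) − J(u*) and T(w) = H(w) − H(u*) − ⟨∇H(u*), w − u*⟩. Assume the error-bound condition: for every M ∈ ℝ there exists a constant s(M) > 0 such that for every u ∈ E with (J + H)(u) ≤ M, writing v̄ = P(u), one has ‖v̄ − u*‖ ≤ s(M)·(R(v̄) + T(v̄)). Then the proximal-gradient iterates u^{k+1} = P(u^k), started from any u^0 ∈ E, converge linearly to u*: there exist C ≥ 0 and q ∈ [0,1) such that ‖u^k − u*‖ ≤ C·q^k for all k ≥ 0. -/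

import Mathlib

/-!
Write `F = J + H`. The descent lemma for `H` (step `1/δ ≥ 1/L`), the gradient inequality for
`H` and the minimality of `P u` combine into `F (P u) ≤ F w + δ/2 ‖w - u‖²` for every `w`.
Testing this with `w` on the segment from `u` to `u*` and using convexity of `F`, the gaps
`aₖ = F(uₖ) - F(u*)` satisfy `aₖ₊₁ ≤ (1 - t) aₖ + δ/2 t² ‖uₖ - u*‖²` for all `t ∈ [0, 1]`.
The iterates stay in the sublevel set `{F ≤ F(u⁰)}`, so one error-bound constant `s` gives
`‖uₖ - u*‖ ≤ s aₖ` for `k ≥ 1`; with `t` small, fixed, the recursion becomes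
`aₖ₊₁ ≤ (1 - t/2) aₖ`, and the error bound turns this geometric decay of the gaps back into
geometric decay of the distances.
-/

open scoped RealInnerProductSpace
open Set AffineMap

section Smooth

variable {E : Type*} [NormedAddCommGroup E] [InnerProductSpace ℝ E] [CompleteSpace E]
  {f : E → ℝ}

theorem HasGradientAt.hasDerivAt_comp_lineMap {g u w : E} {t : ℝ}
    (hf : HasGradientAt f g (lineMap u w t)) :
    HasDerivAt (f ∘ lineMap u w) ⟪g, w - u⟫ t := by
  simpa [InnerProductSpace.toDual_apply_apply] using
    hf.hasFDerivAt.comp_hasDerivAt t hasDerivAt_lineMap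

theorem ConvexOn.add_inner_le_of_hasGradientAt (hconv : ConvexOn ℝ univ f) {g u : E}
    (hf : HasGradientAt f g u) (w : E) : f u + ⟪g, w - u⟫ ≤ f w := by
  have hslope := (hconv.comp_affineMap (lineMap u w)).le_slope_of_hasDerivAt
    (mem_univ 0) (mem_univ 1) one_pos
    (HasGradientAt.hasDerivAt_comp_lineMap (by rwa [lineMap_apply_zero]))
  simp only [slope_def_field, Function.comp_apply, lineMap_apply_one, lineMap_apply_zero,
    sub_zero, div_one] at hslope
  linarith

theorem LipschitzWith.le_add_inner_add_half_mul_norm_sq {f' : E → E} {L : NNReal}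
    (hf : ∀ x, HasGradientAt f (f' x) x) (hLip : LipschitzWith L f') (u w : E) :
    f w ≤ f u + ⟪f' u, w - u⟫ + L / 2 * ‖w - u‖ ^ 2 := by
  have hline (t : ℝ) : HasDerivAt (f ∘ lineMap u w) ⟪f' (lineMap u w t), w - u⟫ t :=
    (hf _).hasDerivAt_comp_lineMap
  have hbound (t : ℝ) : HasDerivAt
      (fun t ↦ f u + t * ⟪f' u, w - u⟫ + L / 2 * t ^ 2 * ‖w - u‖ ^ 2)
      (⟪f' u, w - u⟫ + L * t * ‖w - u‖ ^ 2) t := by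
    have hlin := ((hasDerivAt_id t).mul_const ⟪f' u, w - u⟫).const_add (f u)
    have hquad := ((hasDerivAt_pow 2 t).const_mul ((L : ℝ) / 2)).mul_const (‖w - u‖ ^ 2)
    exact (hlin.add hquad).congr_deriv (by push_cast; ring)
  have hderiv (t : ℝ) (ht : 0 ≤ t) :
      ⟪f' (lineMap u w t), w - u⟫ ≤ ⟪f' u, w - u⟫ + L * t * ‖w - u‖ ^ 2 := by
    have hdist : ‖f' (lineMap u w t) - f' u‖ ≤ L * (t * ‖w - u‖) := by
      simpa [← dist_eq_norm, dist_lineMap_left, abs_of_nonneg ht, dist_comm u w] using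
        hLip.dist_le_mul (lineMap u w t) u
    calc ⟪f' (lineMap u w t), w - u⟫
        = ⟪f' u, w - u⟫ + ⟪f' (lineMap u w t) - f' u, w - u⟫ := by rw [inner_sub_left]; ring
      _ ≤ ⟪f' u, w - u⟫ + ‖f' (lineMap u w t) - f' u‖ * ‖w - u‖ := by
        gcongr; exact real_inner_le_norm _ _
      _ ≤ ⟪f' u, w - u⟫ + L * (t * ‖w - u‖) * ‖w - u‖ := by gcongr
      _ = ⟪f' u, w - u⟫ + L * t * ‖w - u‖ ^ 2 := by ring
  have h := image_le_of_deriv_right_le_deriv_boundary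
    (fun t _ ↦ (hline t).continuousAt.continuousWithinAt)
    (fun t _ ↦ (hline t).hasDerivWithinAt) (by simp)
    (fun t _ ↦ (hbound t).continuousAt.continuousWithinAt)
    (fun t _ ↦ (hbound t).hasDerivWithinAt) (fun t ht ↦ hderiv t ht.1)
    (right_mem_Icc.2 zero_le_one)
  simpa using h

end Smooth

theorem exists_lt_one_le_geom_of_quadratic_step {a : ℕ → ℝ} {c : ℝ} (ha : ∀ k, 0 ≤ a k)
    (hc : 0 ≤ c)
    (hstep : ∀ k t, 0 ≤ t → t ≤ 1 → a (k + 1) ≤ (1 - t) * a k + c * t ^ 2 * a k ^ 2) :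
    ∃ q, 0 < q ∧ q < 1 ∧ ∀ k, a k ≤ q ^ k * a 0 := by
  have hanti : Antitone a :=
    antitone_nat_of_succ_le fun k ↦ by simpa using hstep k 0 le_rfl zero_le_one
  have hden : 0 < 2 * c * a 0 + 1 := by have := ha 0; positivity
  set t := (2 * c * a 0 + 1)⁻¹
  have ht : t * (2 * c * a 0 + 1) = 1 := inv_mul_cancel₀ hden.ne'
  have ht₀ : 0 < t := inv_pos.2 hden
  have hca₀ : 0 ≤ c * a 0 := mul_nonneg hc (ha 0)
  have ht₁ : t ≤ 1 := by nlinarith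
  refine ⟨1 - t / 2, by linarith, by linarith, fun n ↦ le_geom (by linarith) n fun k _ ↦ ?_⟩
  -- `c t a₀ = (1 - t) / 2`, so the quadratic term costs at most half of the linear gain.
  have hsmall : c * t * a k ≤ 1 / 2 :=
    calc c * t * a k ≤ c * t * a 0 := by gcongr; exact hanti (Nat.zero_le k)
      _ ≤ 1 / 2 := by nlinarith
  have hak : 0 ≤ t * a k := mul_nonneg ht₀.le (ha k)
  calc a (k + 1) ≤ (1 - t) * a k + c * t ^ 2 * a k ^ 2 := hstep k t ht₀.le ht₁
    _ = (1 - t) * a k + c * t * a k * (t * a k) := by ring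
    _ ≤ (1 - t) * a k + 1 / 2 * (t * a k) := by gcongr
    _ = (1 - t / 2) * a k := by ring

theorem le_max_mul_pow_of_succ_le_mul_pow {b : ℕ → ℝ} {B q : ℝ} (hq : 0 < q)
    (h : ∀ k, b (k + 1) ≤ B * q ^ k) (k : ℕ) : b k ≤ max (b 0) (B / q) * q ^ k := by
  cases k with
  | zero => simp
  | succ k =>
    calc b (k + 1) ≤ B / q * q ^ (k + 1) := by
          rw [pow_succ', ← mul_assoc, div_mul_cancel₀ _ hq.ne']; exact h k
      _ ≤ max (b 0) (B / q) * q ^ (k + 1) := by gcongr; exact le_max_right _ _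

section ProxGrad

variable {E : Type*} [NormedAddCommGroup E] [InnerProductSpace ℝ E]

def IsProxGradStep (J : E → ℝ) (g : E) (δ : ℝ) (u p : E) : Prop :=
  ∀ v, J p + δ / 2 * ‖p - (u - δ⁻¹ • g)‖ ^ 2 ≤ J v + δ / 2 * ‖v - (u - δ⁻¹ • g)‖ ^ 2

theorem half_mul_norm_sub_sub_inv_smul_sq {δ : ℝ} (hδ : δ ≠ 0) (x u g : E) :
    δ / 2 * ‖x - (u - δ⁻¹ • g)‖ ^ 2 = δ / 2 * ‖x - u‖ ^ 2 + ⟪g, x - u⟫ + ‖g‖ ^ 2 / (2 * δ) := by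
  rw [show x - (u - δ⁻¹ • g) = (x - u) + δ⁻¹ • g by abel, norm_add_sq_real, norm_smul,
    real_inner_smul_right, real_inner_comm, Real.norm_eq_abs, abs_inv]
  field_simp
  rw [sq_abs]
  ring

theorem IsProxGradStep.add_le_add_add_half_mul_norm_sq [CompleteSpace E] {J H : E → ℝ}
    {H' : E → E} {L : NNReal} {δ : ℝ} {u p : E} (hp : IsProxGradStep J (H' u) δ u p)
    (hH : ConvexOn ℝ univ H) (hgrad : ∀ x, HasGradientAt H (H' x) x)
    (hLip : LipschitzWith L H') (hδ : 0 < δ) (hLδ : (L : ℝ) ≤ δ) (w : E) :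
    J p + H p ≤ J w + H w + δ / 2 * ‖w - u‖ ^ 2 := by
  have hmin := hp w
  simp only [half_mul_norm_sub_sub_inv_smul_sq hδ.ne'] at hmin
  have hupper := hLip.le_add_inner_add_half_mul_norm_sq hgrad u p
  have hlower := hH.add_inner_le_of_hasGradientAt (hgrad u) w
  have hLδ' : (L : ℝ) / 2 * ‖p - u‖ ^ 2 ≤ δ / 2 * ‖p - u‖ ^ 2 := by gcongr
  linarith

theorem ConvexOn.sub_le_of_forall_le_add_half_mul_norm_sq {F : E → ℝ} (hF : ConvexOn ℝ univ F)
    {δ : ℝ} {u p : E} (hp : ∀ w, F p ≤ F w + δ / 2 * ‖w - u‖ ^ 2) (z : E) {t : ℝ}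
    (ht₀ : 0 ≤ t) (ht₁ : t ≤ 1) :
    F p - F z ≤ (1 - t) * (F u - F z) + δ / 2 * t ^ 2 * ‖u - z‖ ^ 2 := by
  have hconv : F (lineMap u z t) ≤ (1 - t) * F u + t * F z := by
    simpa [lineMap_apply_module] using
      hF.2 (mem_univ u) (mem_univ z) (sub_nonneg.2 ht₁) ht₀ (sub_add_cancel 1 t)
  have hdist : ‖lineMap u z t - u‖ = t * ‖u - z‖ := by
    rw [← dist_eq_norm, dist_lineMap_left, Real.norm_eq_abs, abs_of_nonneg ht₀, dist_eq_norm]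
  have hprox := hp (lineMap u z t)
  rw [hdist] at hprox
  linarith

theorem ConvexOn.exists_norm_iterate_sub_le_geom {F : E → ℝ} (hF : ConvexOn ℝ univ F)
    {P : E → E} {δ s : ℝ} (hδ : 0 ≤ δ) (hs : 0 ≤ s)
    (hP : ∀ u w, F (P u) ≤ F w + δ / 2 * ‖w - u‖ ^ 2)
    {z : E} (hz : ∀ w, F z ≤ F w) (u₀ : E)
    (hdist : ∀ k, ‖P^[k + 1] u₀ - z‖ ≤ s * (F (P^[k + 1] u₀) - F z)) :
    ∃ C, 0 ≤ C ∧ ∃ q, 0 ≤ q ∧ q < 1 ∧ ∀ k, ‖P^[k] u₀ - z‖ ≤ C * q ^ k := by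
  set a : ℕ → ℝ := fun k ↦ F (P^[k + 1] u₀) - F z
  have hquad (k : ℕ) (t : ℝ) (ht₀ : 0 ≤ t) (ht₁ : t ≤ 1) :
      a (k + 1) ≤ (1 - t) * a k + δ / 2 * s ^ 2 * t ^ 2 * a k ^ 2 := by
    have hinterp := hF.sub_le_of_forall_le_add_half_mul_norm_sq (hP (P^[k + 1] u₀)) z ht₀ ht₁
    rw [← Function.iterate_succ_apply' P] at hinterp
    have hsq : ‖P^[k + 1] u₀ - z‖ ^ 2 ≤ (s * a k) ^ 2 :=
      pow_le_pow_left₀ (norm_nonneg _) (hdist k) 2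
    calc a (k + 1) ≤ (1 - t) * a k + δ / 2 * t ^ 2 * ‖P^[k + 1] u₀ - z‖ ^ 2 := hinterp
      _ ≤ (1 - t) * a k + δ / 2 * t ^ 2 * (s * a k) ^ 2 := by gcongr
      _ = (1 - t) * a k + δ / 2 * s ^ 2 * t ^ 2 * a k ^ 2 := by ring
  obtain ⟨q, hq₀, hq₁, hgeom⟩ := exists_lt_one_le_geom_of_quadratic_step (a := a)
    (fun k ↦ sub_nonneg.2 (hz _)) (by positivity) hquad
  refine ⟨max ‖u₀ - z‖ (s * a 0 / q), (norm_nonneg _).trans (le_max_left _ _), q, hq₀.le,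
    hq₁, le_max_mul_pow_of_succ_le_mul_pow hq₀ fun k ↦ ?_⟩
  calc ‖P^[k + 1] u₀ - z‖ ≤ s * a k := hdist k
    _ ≤ s * (q ^ k * a 0) := by gcongr; exact hgeom k
    _ = s * a 0 * q ^ k := by ring

end ProxGrad

/-- Linear convergence of the proximal-gradient iteration under the error-bound
condition (Lemma 1 of the paper). -/
theorem proximal_gradient_linear_convergence
    {n : ℕ} (J H : EuclideanSpace ℝ (Fin n) → ℝ)
    (hJ : ConvexOn ℝ Set.univ J) (hH : ConvexOn ℝ Set.univ H)
    (H' : EuclideanSpace ℝ (Fin n) → EuclideanSpace ℝ (Fin n))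
    (hgrad : ∀ x, HasGradientAt H (H' x) x)
    (L : NNReal) (hL : 0 < L) (hLip : LipschitzWith L H')
    (ustar : EuclideanSpace ℝ (Fin n))
    (hustar : ∀ w, J ustar + H ustar ≤ J w + H w)
    (δ : ℝ) (hδ : (L : ℝ) ≤ δ)
    (P : EuclideanSpace ℝ (Fin n) → EuclideanSpace ℝ (Fin n))
    (hP : ∀ u v, J (P u) + δ / 2 * ‖P u - (u - δ⁻¹ • H' u)‖ ^ 2 ≤
      J v + δ / 2 * ‖v - (u - δ⁻¹ • H' u)‖ ^ 2)
    (R T : EuclideanSpace ℝ (Fin n) → ℝ)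
    (hR : ∀ w, R w = ⟪H' ustar, w - ustar⟫ + J w - J ustar)
    (hT : ∀ w, T w = H w - H ustar - ⟪H' ustar, w - ustar⟫)
    (herr : ∀ M : ℝ, ∃ s : ℝ, 0 < s ∧ ∀ u, J u + H u ≤ M →
      ‖P u - ustar‖ ≤ s * (R (P u) + T (P u))) :
    ∀ u0 : EuclideanSpace ℝ (Fin n), ∃ C : ℝ, 0 ≤ C ∧ ∃ q : ℝ, 0 ≤ q ∧ q < 1 ∧
      ∀ k : ℕ, ‖P^[k] u0 - ustar‖ ≤ C * q ^ k := by
  intro u0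
  have hδ₀ : 0 < δ := (NNReal.coe_pos.2 hL).trans_le hδ
  have hstep (u w) : (J + H) (P u) ≤ (J + H) w + δ / 2 * ‖w - u‖ ^ 2 :=
    IsProxGradStep.add_le_add_add_half_mul_norm_sq (hP u) hH hgrad hLip hδ₀ hδ w
  have hdesc : Antitone fun k ↦ (J + H) (P^[k] u0) := antitone_nat_of_succ_le fun k ↦ by
    simpa [Function.iterate_succ_apply'] using hstep (P^[k] u0) (P^[k] u0)
  have hRT (w) : R w + T w = (J + H) w - (J + H) ustar := by
    rw [hR, hT, Pi.add_apply, Pi.add_apply]; ring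
  obtain ⟨s, hs, hbound⟩ := herr ((J + H) u0)
  refine (hJ.add hH).exists_norm_iterate_sub_le_geom hδ₀.le hs.le hstep hustar u0 fun k ↦ ?_
  simpa [hRT, Function.iterate_succ_apply'] using hbound (P^[k] u0) (hdesc (Nat.zero_le k))
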